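/- The Tutte–Coxeter graph (Tutte 8-cage), a 3-regular graph on 30 vertices with girth 8, has basis number at least 4. -/

import Mathlib

/-!
In a graph of girth at least 8, every nonzero element of the cycle space meets at least 8
vertices: a nonzero even subgraph of a loopless graph has minimum degree at least 2, so a
non-backtracking walk inside it closes up into a cycle.
At a vertex `v` of a cubic graph, every basis element through `v` uses at least two of the
three edges at `v`, each of which lies in at most 3 members of a 3-basis, so at most
`⌊9/2⌋ = 4` members pass through `v`. Double counting vertex–cycle incidences of a 3-basis `B`
gives `8 |B| ≤ 4 · 30 = 120`, while `|B| = dim ≥ |E| - |V| + 1 = 45 - 30 + 1 = 16`.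
-/

open scoped Classical

noncomputable section

/-- Helper: quotients of finite types are finite. -/
noncomputable def quotFintype {α : Type} [Fintype α] (r : α → α → Prop) : Fintype (Quot r) :=
  Fintype.ofSurjective (Quot.mk r) fun q => Quot.exists_rep q

/-- A finite multigraph.  Each edge `e` carries an (arbitrarily chosen) ordering of its two
endpoints, `fst e` and `snd e`; a loop is an edge with `fst e = snd e`. -/
structure Multigraph where
  V : Type
  E : Type
  fintV : Fintype V
  fintE : Fintype E
  fst : E → V
  snd : E → V

attribute [instance] Multigraph.fintV Multigraph.fintE

namespace Multigraph

variable (G : Multigraph)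

/-- Incidence of a vertex and an edge, modulo 2 (a loop is incident twice, i.e. 0 mod 2). -/
noncomputable def inc (v : G.V) (e : G.E) : ZMod 2 :=
  (if G.fst e = v then 1 else 0) + (if G.snd e = v then 1 else 0)

/-- The cycle space of `G` over `F_2`: characteristic vectors of edge sets in which every
vertex has even degree (i.e. Eulerian subgraphs), with addition = symmetric difference. -/
noncomputable def cycleSpace : Submodule (ZMod 2) (G.E → ZMod 2) where
  carrier := {x | ∀ v : G.V, ∑ e : G.E, G.inc v e * x e = 0}
  zero_mem' := by intro v; simp
  add_mem' := by
    intro a b ha hb v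
    have h : ∀ e : G.E, G.inc v e * (a + b) e = G.inc v e * a e + G.inc v e * b e := by
      intro e
      show G.inc v e * (a e + b e) = G.inc v e * a e + G.inc v e * b e
      ring
    rw [Finset.sum_congr rfl fun e _ => h e, Finset.sum_add_distrib, ha v, hb v, add_zero]
  smul_mem' := by
    intro c x hx v
    have h : ∀ e : G.E, G.inc v e * (c • x) e = c * (G.inc v e * x e) := by
      intro e
      show G.inc v e * (c * x e) = c * (G.inc v e * x e)
      ring
    rw [Finset.sum_congr rfl fun e _ => h e, ← Finset.mul_sum, hx v, mul_zero]

/-- The charge of an edge `e` with respect to a collection `B` of (characteristic vectors of)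
subgraphs: the number of members of `B` containing `e`. -/
noncomputable def charge (B : Finset (G.E → ZMod 2)) (e : G.E) : ℕ :=
  (B.filter fun x => x e ≠ 0).card

/-- `B` is a basis of the cycle space of `G`. -/
def IsCycleBasis (B : Finset (G.E → ZMod 2)) : Prop :=
  (∀ x ∈ B, x ∈ G.cycleSpace) ∧
    LinearIndependent (ZMod 2) (fun x : B => (x : G.E → ZMod 2)) ∧
    Submodule.span (ZMod 2) (B : Set (G.E → ZMod 2)) = G.cycleSpace

/-- `B` is a `k`-basis: a basis of the cycle space in which every edge has charge at most `k`. -/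
def IsKBasis (k : ℕ) (B : Finset (G.E → ZMod 2)) : Prop :=
  G.IsCycleBasis B ∧ ∀ e : G.E, G.charge B e ≤ k

/-- The basis number of `G`: the least `k` such that `G` has a `k`-basis. -/
noncomputable def basisNum : ℕ := sInf {k | ∃ B, G.IsKBasis k B}

/-- Adjacency of two vertices. -/
def Adj (a b : G.V) : Prop :=
  ∃ e : G.E, (G.fst e = a ∧ G.snd e = b) ∨ (G.fst e = b ∧ G.snd e = a)

/-- Connectivity. -/
def Connected : Prop :=
  Nonempty G.V ∧ ∀ a b : G.V, Relation.ReflTransGen G.Adj a b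

/-- Degree of a vertex (a loop counts twice). -/
noncomputable def degree (v : G.V) : ℕ :=
  ∑ e : G.E, ((if G.fst e = v then 1 else 0) + (if G.snd e = v then 1 else 0))

/-- The subgraph with the same vertex set and edge set restricted to `S`. -/
noncomputable def edgeRestrict (S : Set G.E) : Multigraph where
  V := G.V
  E := S
  fintV := G.fintV
  fintE := (Set.toFinite S).fintype
  fst := fun e => G.fst e.1
  snd := fun e => G.snd e.1

/-- Deletion of a vertex (and all edges incident with it). -/
noncomputable def deleteVertex (v : G.V) : Multigraph where
  V := {u : G.V // u ≠ v}
  E := {e : G.E // G.fst e ≠ v ∧ G.snd e ≠ v}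
  fintV := by classical exact inferInstance
  fintE := by classical exact inferInstance
  fst := fun e => ⟨G.fst e.1, e.2.1⟩
  snd := fun e => ⟨G.snd e.1, e.2.2⟩

/-- `G` is 2-connected: at least 3 vertices, connected, and no cutvertex. -/
def TwoConnected : Prop :=
  G.Connected ∧ 3 ≤ Nat.card G.V ∧ ∀ v : G.V, (G.deleteVertex v).Connected

/-- A cycle of length `n` in `G`: `n` distinct vertices and `n` distinct edges, with edge `i`
joining vertex `i` to vertex `i+1` (cyclically). -/
def IsCycleOn (n : ℕ) (vs : Fin n → G.V) (es : Fin n → G.E) : Prop :=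
  Function.Injective vs ∧ Function.Injective es ∧
    ∀ i : Fin n,
      (G.fst (es i) = vs i ∧ G.snd (es i) = vs (finRotate n i)) ∨
      (G.fst (es i) = vs (finRotate n i) ∧ G.snd (es i) = vs i)

/-- A path with `n` edges, given by its (distinct) vertices and its edges. -/
def IsPathOn (n : ℕ) (vs : Fin (n + 1) → G.V) (es : Fin n → G.E) : Prop :=
  Function.Injective vs ∧
    ∀ i : Fin n,
      (G.fst (es i) = vs i.castSucc ∧ G.snd (es i) = vs i.succ) ∨
      (G.fst (es i) = vs i.succ ∧ G.snd (es i) = vs i.castSucc)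

/-- `p` is the characteristic vector of (the edge set of) a path from `s` to `t`. -/
def IsPathVec (s t : G.V) (p : G.E → ZMod 2) : Prop :=
  ∃ (n : ℕ) (vs : Fin (n + 1) → G.V) (es : Fin n → G.E),
    G.IsPathOn n vs es ∧ vs 0 = s ∧ vs (Fin.last n) = t ∧
      ∀ f : G.E, p f ≠ 0 ↔ ∃ i, es i = f

/-- Two edges lie in a common block: they are equal, or they lie on a common cycle. -/
def BlockRel (e f : G.E) : Prop :=
  e = f ∨ ∃ (n : ℕ) (vs : Fin n → G.V) (es : Fin n → G.E),
    1 ≤ n ∧ G.IsCycleOn n vs es ∧ (∃ i, es i = e) ∧ (∃ j, es j = f)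

/-- `T` is a spanning tree of `G` (as an edge set): the spanning subgraph with edge set `T`
is connected and has no cycles. -/
def IsSpanningTree (T : Set G.E) : Prop :=
  (G.edgeRestrict T).Connected ∧
    ∀ (n : ℕ) (vs : Fin n → (G.edgeRestrict T).V) (es : Fin n → (G.edgeRestrict T).E),
      (G.edgeRestrict T).IsCycleOn n vs es → n = 0

/-- Contraction of the edge `e`: identify its two endpoints and delete `e`. -/
noncomputable def contract (e : G.E) : Multigraph where
  V := Quot (fun a b : G.V => a = G.fst e ∧ b = G.snd e)
  E := {f : G.E // f ≠ e}
  fintV := quotFintype _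
  fintE := by classical exact inferInstance
  fst := fun f => Quot.mk _ (G.fst f.1)
  snd := fun f => Quot.mk _ (G.snd f.1)

/-- Addition of a (possibly parallel) edge joining `u` and `v`. -/
noncomputable def addEdge (u v : G.V) : Multigraph where
  V := G.V
  E := Option G.E
  fintV := G.fintV
  fintE := inferInstance
  fst := fun o => o.elim u G.fst
  snd := fun o => o.elim v G.snd

/-- Subdivision of the edge `e`: delete `e` and add a new vertex (`none`) joined to both
endpoints of `e`. -/
noncomputable def subdivide (e : G.E) : Multigraph where
  V := Option G.V
  E := {f : G.E // f ≠ e} ⊕ Bool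
  fintV := inferInstance
  fintE := by classical exact inferInstance
  fst := Sum.elim (fun f => some (G.fst f.1))
    (fun b => cond b (some (G.fst e)) (some (G.snd e)))
  snd := Sum.elim (fun f => some (G.snd f.1)) (fun _ => none)

/-- Replacement of the edge `e` of `G` by the graph `H` with terminals `s`, `t`:
delete `e`, take the disjoint union with `H`, and identify the endpoints of `e`
with the terminals. -/
noncomputable def replaceEdge (e : G.E) (H : Multigraph) (s t : H.V) : Multigraph where
  V := Quot (fun a b : G.V ⊕ H.V =>
        (a = Sum.inl (G.fst e) ∧ b = Sum.inr s) ∨ (a = Sum.inl (G.snd e) ∧ b = Sum.inr t))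
  E := {f : G.E // f ≠ e} ⊕ H.E
  fintV := quotFintype _
  fintE := by classical exact inferInstance
  fst := Sum.elim (fun f => Quot.mk _ (Sum.inl (G.fst f.1)))
    (fun f => Quot.mk _ (Sum.inr (H.fst f)))
  snd := Sum.elim (fun f => Quot.mk _ (Sum.inl (G.snd f.1)))
    (fun f => Quot.mk _ (Sum.inr (H.snd f)))

/-! ### Combinatorial embeddings (rotation systems) and planarity -/

/-- Darts: each edge gives two darts. -/
def Dart : Type := G.E × Bool

noncomputable instance : Fintype G.Dart := inferInstanceAs (Fintype (G.E × Bool))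

/-- The vertex at which a dart is based. -/
def dartVertex (d : G.Dart) : G.V := cond d.2 (G.fst d.1) (G.snd d.1)

/-- The involution exchanging the two darts of each edge. -/
def dartFlip : Equiv.Perm G.Dart where
  toFun d := (d.1, !d.2)
  invFun d := (d.1, !d.2)
  left_inv := fun d => by cases d; simp; rfl
  right_inv := fun d => by cases d; simp; rfl

/-- `σ` is a rotation system: its orbits are exactly the sets of darts based at a
common vertex. -/
def IsRotation (σ : Equiv.Perm G.Dart) : Prop :=
  ∀ d d' : G.Dart, σ.SameCycle d d' ↔ G.dartVertex d = G.dartVertex d'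

/-- The face permutation of a rotation system. -/
def facePerm (σ : Equiv.Perm G.Dart) : Equiv.Perm G.Dart := G.dartFlip.trans σ

/-- The faces of the embedding given by `σ`: orbits of the face permutation. -/
def Faces (σ : Equiv.Perm G.Dart) : Type := Quot (G.facePerm σ).SameCycle

/-- The face containing a given dart. -/
def faceOf (σ : Equiv.Perm G.Dart) (d : G.Dart) : G.Faces σ := Quot.mk _ d

noncomputable def numFaces (σ : Equiv.Perm G.Dart) : ℕ := Nat.card (G.Faces σ)

noncomputable def numComponents : ℕ := Nat.card (Quot G.Adj)

/-- The number of connected components containing at least one edge. -/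
noncomputable def numEdgedComponents : ℕ :=
  Nat.card {c : Quot G.Adj // ∃ e : G.E, Quot.mk G.Adj (G.fst e) = c}

/-- `σ` is a planar (genus zero) embedding, by Euler's formula
(componentwise `V - E + F = 2`, where components without edges contribute one global face). -/
def IsPlanarRotation (σ : Equiv.Perm G.Dart) : Prop :=
  G.IsRotation σ ∧
    G.numFaces σ + Nat.card G.V = Nat.card G.E + G.numComponents + G.numEdgedComponents

/-- `G` is planar: it admits a genus-zero combinatorial embedding. -/
def IsPlanar : Prop := ∃ σ : Equiv.Perm G.Dart, G.IsPlanarRotation σ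

/-- The boundary of a face, as an element of `F_2^E`: the edges having exactly one of
their two darts on the face. -/
noncomputable def faceBoundary (σ : Equiv.Perm G.Dart) (c : G.Faces σ) : G.E → ZMod 2 :=
  fun e => ∑ b : Bool, if G.faceOf σ (e, b) = c then 1 else 0

/-- The vertex `v` lies on the face `c`. -/
def VertexOnFace (σ : Equiv.Perm G.Dart) (v : G.V) (c : G.Faces σ) : Prop :=
  ∃ d : G.Dart, G.faceOf σ d = c ∧ G.dartVertex d = v

/-- The edge `e` lies on the face `c`. -/
def EdgeOnFace (σ : Equiv.Perm G.Dart) (e : G.E) (c : G.Faces σ) : Prop :=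
  ∃ b : Bool, G.faceOf σ (e, b) = c

end Multigraph

namespace Multigraph

open Finset Module

variable {G : Multigraph}

section Incidence

variable (G) in
def Incident (v : G.V) (e : G.E) : Prop := G.fst e = v ∨ G.snd e = v

variable (G) in
def Joins (e : G.E) (a b : G.V) : Prop :=
  (G.fst e = a ∧ G.snd e = b) ∨ (G.fst e = b ∧ G.snd e = a)

theorem Joins.incident_left {e : G.E} {a b : G.V} (h : G.Joins e a b) : G.Incident a e := by
  rcases h with ⟨h, -⟩ | ⟨-, h⟩
  exacts [Or.inl h, Or.inr h]

theorem Joins.incident_right {e : G.E} {a b : G.V} (h : G.Joins e a b) : G.Incident b e := by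
  rcases h with ⟨-, h⟩ | ⟨h, -⟩
  exacts [Or.inr h, Or.inl h]

theorem Joins.eq_or_eq {e : G.E} {a b c d : G.V} (h₁ : G.Joins e a b) (h₂ : G.Joins e c d) :
    a = c ∨ b = c := by
  unfold Joins at h₁ h₂
  grind

theorem exists_joins_of_incident {v : G.V} {e : G.E} (h : G.Incident v e) :
    ∃ w, G.Joins e v w := by
  rcases h with h | h
  exacts [⟨G.snd e, Or.inl ⟨h, rfl⟩⟩, ⟨G.fst e, Or.inr ⟨rfl, h⟩⟩]

theorem inc_eq_ite (hloop : ∀ e, G.fst e ≠ G.snd e) (v : G.V) (e : G.E) :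
    G.inc v e = if G.Incident v e then 1 else 0 := by
  unfold inc Incident
  have := hloop e
  by_cases h₁ : G.fst e = v <;> by_cases h₂ : G.snd e = v <;> simp_all

theorem card_incident_eq_degree (hloop : ∀ e, G.fst e ≠ G.snd e) (v : G.V) :
    #{e | G.Incident v e} = G.degree v := by
  rw [card_filter, degree]
  refine sum_congr rfl fun e _ => ?_
  unfold Incident
  have := hloop e
  by_cases h₁ : G.fst e = v <;> by_cases h₂ : G.snd e = v <;> simp_all

variable (G) in
theorem sum_degrees_eq_twice_card_edges : ∑ v, G.degree v = 2 * Fintype.card G.E := by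
  simp only [degree]
  rw [sum_comm]
  simp [sum_add_distrib, mul_comm]

end Incidence

section CycleSpace

theorem even_card_incident_support (hloop : ∀ e, G.fst e ≠ G.snd e) {x : G.E → ZMod 2}
    (hx : x ∈ G.cycleSpace) (v : G.V) : Even #{e | G.Incident v e ∧ x e ≠ 0} := by
  have hterm : ∀ e, G.inc v e * x e = if G.Incident v e ∧ x e ≠ 0 then 1 else 0 := by
    intro e
    have : ∀ a : ZMod 2, a = if a ≠ 0 then 1 else 0 := by decide
    rw [inc_eq_ite hloop, this (x e)]
    by_cases hI : G.Incident v e <;> by_cases hxe : x e = 0 <;> simp [hI, hxe]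
  have hsum : ∑ e, G.inc v e * x e = 0 := hx v
  rw [sum_congr rfl fun e _ => hterm e, sum_boole] at hsum
  exact ZMod.natCast_eq_zero_iff_even.mp hsum

theorem exists_incident_ne_of_mem_cycleSpace (hloop : ∀ e, G.fst e ≠ G.snd e)
    {x : G.E → ZMod 2} (hx : x ∈ G.cycleSpace) {e : G.E} {v : G.V} (hxe : x e ≠ 0)
    (hv : G.Incident v e) : ∃ f, x f ≠ 0 ∧ f ≠ e ∧ G.Incident v f := by
  have he : e ∈ ({f | G.Incident v f ∧ x f ≠ 0} : Finset G.E) := by simp [hv, hxe]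
  obtain ⟨r, hr⟩ := even_card_incident_support hloop hx v
  have hpos := card_pos.2 ⟨e, he⟩
  obtain ⟨f, hf, hfe⟩ := exists_mem_ne (s := {f | G.Incident v f ∧ x f ≠ 0}) (by omega) e
  simp only [mem_filter, mem_univ, true_and] at hf
  exact ⟨f, hf.2, hfe, hf.1⟩

variable (G) in
theorem card_E_lt_finrank_cycleSpace_add_card_V [Nonempty G.V] :
    Fintype.card G.E < finrank (ZMod 2) G.cycleSpace + Fintype.card G.V := by
  let D : (G.E → ZMod 2) →ₗ[ZMod 2] (G.V → ZMod 2) := Matrix.mulVecLin (Matrix.of G.inc)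
  have hker : LinearMap.ker D = G.cycleSpace := by
    ext x
    simp only [LinearMap.mem_ker, D, Matrix.mulVecLin_apply, funext_iff, Matrix.mulVec,
      dotProduct, Matrix.of_apply, Pi.zero_apply]
    rfl
  have hcol : ∀ e, ∑ v, G.inc v e = 0 := by
    intro e
    simp only [inc, sum_add_distrib, sum_ite_eq, mem_univ, if_true]
    decide
  have hrange : LinearMap.range D ≠ ⊤ := by
    obtain ⟨v₀⟩ := ‹Nonempty G.V›
    intro htop
    obtain ⟨x, hx⟩ := LinearMap.range_eq_top.mp htop (Pi.single v₀ 1)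
    have h := congrArg (fun y : G.V → ZMod 2 => ∑ v, y v) hx
    simp only [D, Matrix.mulVecLin_apply, Matrix.mulVec, dotProduct, Matrix.of_apply] at h
    rw [sum_comm] at h
    simp [← sum_mul, hcol] at h
  have hlt := Submodule.finrank_lt hrange
  have hrk := LinearMap.finrank_range_add_finrank_ker D
  rw [hker, finrank_pi] at hrk
  rw [finrank_pi] at hlt
  omega

variable (G) in
theorem exists_isKBasis : ∃ k B, G.IsKBasis k B := by
  obtain ⟨b, hb, hspan, hli⟩ :=
    exists_linearIndependent (ZMod 2) (G.cycleSpace : Set (G.E → ZMod 2))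
  have hB : ((Set.toFinset b : Finset (G.E → ZMod 2)) : Set (G.E → ZMod 2)) = b :=
    Set.coe_toFinset b
  refine ⟨_, b.toFinset, ⟨fun x hx => hb (by simpa using hx), ?_, ?_⟩, fun e => card_filter_le _ _⟩
  · rw [← hB] at hli
    exact hli
  · rw [hB, hspan, Submodule.span_eq]

end CycleSpace

section Cycles

theorem exists_isCycleOn_of_nonbacktracking {vv : ℕ → G.V} {ge : ℕ → G.E}
    (hjoin : ∀ n, G.Joins (ge n) (vv n) (vv (n + 1))) (hnb : ∀ n, ge (n + 1) ≠ ge n) :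
    ∃ (m : ℕ) (vs : Fin (m + 1) → G.V) (es : Fin (m + 1) → G.E),
      G.IsCycleOn (m + 1) vs es ∧ ∀ r, ∃ n, vs r = vv n := by
  have hrep : ∃ d i, vv i = vv (i + d + 1) := by
    obtain ⟨a, b, hab, h⟩ := Finite.exists_ne_map_eq_of_infinite vv
    rcases lt_or_gt_of_ne hab with hlt | hlt
    · exact ⟨b - a - 1, a, by rw [h]; congr 1; omega⟩
    · exact ⟨a - b - 1, b, by rw [← h]; congr 1; omega⟩
  -- the shortest closed stretch of the walk is a cycle
  set d := Nat.find hrep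
  obtain ⟨i, hi⟩ := Nat.find_spec hrep
  have hdist : ∀ a b, a < b → b ≤ a + d → vv a ≠ vv b := fun a b hab hbd heq =>
    Nat.find_min hrep (show b - a - 1 < d by omega) ⟨a, by rw [heq]; congr 1; omega⟩
  have hinj : ∀ r s : Fin (d + 1), vv (i + r) = vv (i + s) → r = s := by
    intro r s h
    rcases lt_trichotomy r s with hrs | hrs | hrs
    · exact absurd h (hdist _ _ (by omega) (by omega))
    · exact hrs
    · exact absurd h.symm (hdist _ _ (by omega) (by omega))
  have hrot : ∀ r : Fin (d + 1), vv (i + (finRotate (d + 1) r : ℕ)) = vv (i + r + 1) := by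
    intro r
    rw [finRotate_apply, Fin.val_add_one]
    split_ifs with hr
    · rw [hr, Fin.val_last, add_zero, hi]
    · rfl
  refine ⟨d, fun r => vv (i + r), fun r => ge (i + r), ⟨fun r s h => hinj r s h, ?_, ?_⟩,
    fun r => ⟨i + r, rfl⟩⟩
  · intro r s (h : ge (i + r) = ge (i + s))
    by_contra hne
    wlog hrs : r < s generalizing r s
    · exact this h.symm (Ne.symm hne) (lt_of_le_of_ne (not_lt.1 hrs) (Ne.symm hne))
    have hjoin' : G.Joins (ge (i + r)) (vv (i + s)) (vv (i + s + 1)) := by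
      rw [h]; exact hjoin _
    rcases (hjoin (i + r)).eq_or_eq hjoin' with h' | h'
    · exact hne (hinj r s h')
    · rcases eq_or_lt_of_le (show (r : ℕ) + 1 ≤ s from hrs) with hsucc | hlt
      · exact hnb (i + r) (by rw [show i + r + 1 = i + s by omega]; exact h.symm)
      · exact hdist _ _ (by omega) (by omega) h'
  · intro r
    show G.Joins (ge (i + r)) (vv (i + r)) (vv (i + (finRotate (d + 1) r : ℕ)))
    rw [hrot]
    exact hjoin (i + r)

theorem exists_nonbacktracking_walk {F : G.E → Prop} {e₀ : G.E} (he₀ : F e₀)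
    (hF : ∀ e v, F e → G.Incident v e → ∃ f, F f ∧ f ≠ e ∧ G.Incident v f) :
    ∃ (vv : ℕ → G.V) (ge : ℕ → G.E),
      (∀ n, F (ge n) ∧ G.Joins (ge n) (vv n) (vv (n + 1))) ∧ ∀ n, ge (n + 1) ≠ ge n := by
  have hstep : ∀ p : G.E × G.V, F p.1 ∧ G.Incident p.2 p.1 → ∃ q : G.E × G.V,
      (F q.1 ∧ G.Incident q.2 q.1) ∧ q.1 ≠ p.1 ∧ G.Joins q.1 p.2 q.2 := by
    rintro ⟨e, v⟩ ⟨he, hv⟩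
    obtain ⟨f, hf, hfe, hvf⟩ := hF e v he hv
    obtain ⟨w, hw⟩ := exists_joins_of_incident hvf
    exact ⟨(f, w), ⟨hf, hw.incident_right⟩, hfe, hw⟩
  choose! next hnext using hstep
  set p : ℕ → G.E × G.V := fun n => next^[n] (e₀, G.snd e₀)
  have hsucc : ∀ n, p (n + 1) = next (p n) := fun n => Function.iterate_succ_apply' _ _ _
  have hp : ∀ n, F (p n).1 ∧ G.Incident (p n).2 (p n).1 := by
    intro n
    induction n with
    | zero => exact ⟨he₀, Or.inr rfl⟩
    | succ n ih => rw [hsucc]; exact (hnext _ ih).1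
  refine ⟨fun n => (p n).2, fun n => (p (n + 1)).1, fun n => ?_, fun n => ?_⟩
  · simp only [hsucc]
    exact ⟨(hnext _ (hp n)).1.1, (hnext _ (hp n)).2.2⟩
  · simp only [hsucc (n + 1)]
    exact (hnext _ (hp (n + 1))).2.1

theorem exists_isCycleOn_of_forall_exists_ne {F : G.E → Prop} {e₀ : G.E} (he₀ : F e₀)
    (hF : ∀ e v, F e → G.Incident v e → ∃ f, F f ∧ f ≠ e ∧ G.Incident v f) :
    ∃ (m : ℕ) (vs : Fin (m + 1) → G.V) (es : Fin (m + 1) → G.E),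
      G.IsCycleOn (m + 1) vs es ∧ ∀ r, ∃ e, F e ∧ G.Incident (vs r) e := by
  obtain ⟨vv, ge, hwalk, hnb⟩ := exists_nonbacktracking_walk he₀ hF
  obtain ⟨m, vs, es, hcyc, hvs⟩ :=
    exists_isCycleOn_of_nonbacktracking (fun n => (hwalk n).2) hnb
  refine ⟨m, vs, es, hcyc, fun r => ?_⟩
  obtain ⟨n, hn⟩ := hvs r
  rw [hn]
  exact ⟨ge n, (hwalk n).1, (hwalk n).2.incident_left⟩

end Cycles

variable (G) in
def GirthAtLeast (g : ℕ) : Prop :=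
  ∀ (n : ℕ) (vs : Fin n → G.V) (es : Fin n → G.E), G.IsCycleOn n vs es → 1 ≤ n → g ≤ n

theorem GirthAtLeast.fst_ne_snd {g : ℕ} (hg : G.GirthAtLeast g) (hg2 : 2 ≤ g) (e : G.E) :
    G.fst e ≠ G.snd e := by
  intro h
  have := hg 1 (fun _ => G.fst e) (fun _ => e)
    ⟨fun _ _ _ => Subsingleton.elim _ _, fun _ _ _ => Subsingleton.elim _ _,
      fun _ => Or.inl ⟨rfl, h.symm⟩⟩ le_rfl
  omega

variable (G) in
def vertexSupport (x : G.E → ZMod 2) : Finset G.V := {v | ∃ e, x e ≠ 0 ∧ G.Incident v e}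

theorem GirthAtLeast.le_card_vertexSupport {g : ℕ} (hg : G.GirthAtLeast g) (hg2 : 2 ≤ g)
    {x : G.E → ZMod 2} (hx : x ∈ G.cycleSpace) (hx0 : x ≠ 0) : g ≤ #(G.vertexSupport x) := by
  obtain ⟨e₀, he₀⟩ := Function.ne_iff.mp hx0
  obtain ⟨m, vs, es, hcyc, hvs⟩ := exists_isCycleOn_of_forall_exists_ne (F := (x · ≠ 0)) he₀
    fun e v he hv => exists_incident_ne_of_mem_cycleSpace (hg.fst_ne_snd hg2) hx he hv
  calc g ≤ m + 1 := hg _ vs es hcyc (by omega)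
    _ = #(univ : Finset (Fin (m + 1))) := by simp
    _ ≤ #(G.vertexSupport x) :=
      card_le_card_of_injOn vs (fun r _ => by simpa [vertexSupport] using hvs r) hcyc.1.injOn

section Counting

theorem two_mul_card_filter_mem_vertexSupport_le (hloop : ∀ e, G.fst e ≠ G.snd e)
    {B : Finset (G.E → ZMod 2)} (hB : ∀ x ∈ B, x ∈ G.cycleSpace) (v : G.V) :
    2 * #{x ∈ B | v ∈ G.vertexSupport x} ≤ ∑ e with G.Incident v e, G.charge B e := by
  have htwo : ∀ x ∈ B, v ∈ G.vertexSupport x → 2 ≤ #{e | G.Incident v e ∧ x e ≠ 0} := by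
    intro x hxB hv
    obtain ⟨e, hxe, hve⟩ : ∃ e, x e ≠ 0 ∧ G.Incident v e := by simpa [vertexSupport] using hv
    obtain ⟨r, hr⟩ := even_card_incident_support hloop (hB x hxB) v
    have : 0 < #{e | G.Incident v e ∧ x e ≠ 0} := card_pos.2 ⟨e, by simp [hve, hxe]⟩
    omega
  calc 2 * #{x ∈ B | v ∈ G.vertexSupport x}
      = ∑ x ∈ B with v ∈ G.vertexSupport x, 2 := by rw [sum_const, smul_eq_mul, mul_comm]
    _ ≤ ∑ x ∈ B with v ∈ G.vertexSupport x, #{e | G.Incident v e ∧ x e ≠ 0} :=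
        sum_le_sum fun x hx => htwo x (mem_filter.1 hx).1 (mem_filter.1 hx).2
    _ ≤ ∑ x ∈ B, #{e | G.Incident v e ∧ x e ≠ 0} := sum_le_sum_of_subset (filter_subset _ _)
    _ = ∑ e with G.Incident v e, G.charge B e := by
        simpa [bipartiteAbove, bipartiteBelow, charge, filter_filter] using
          sum_card_bipartiteAbove_eq_sum_card_bipartiteBelow (s := B)
            (t := ({e | G.Incident v e} : Finset G.E)) (r := fun x e => x e ≠ 0)

theorem GirthAtLeast.mul_card_le_sum_degrees_eq_twice_card_edges_mul_div_two {g k : ℕ} (hg : G.GirthAtLeast g)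
    (hg2 : 2 ≤ g) {B : Finset (G.E → ZMod 2)} (hB : ∀ x ∈ B, x ∈ G.cycleSpace)
    (hB0 : (0 : G.E → ZMod 2) ∉ B) (hk : ∀ e, G.charge B e ≤ k) :
    g * #B ≤ ∑ v, G.degree v * k / 2 := by
  have hloop := hg.fst_ne_snd hg2
  have hvert : ∀ v, #{x ∈ B | v ∈ G.vertexSupport x} ≤ G.degree v * k / 2 := by
    intro v
    have h := two_mul_card_filter_mem_vertexSupport_le hloop hB v
    have : ∑ e with G.Incident v e, G.charge B e ≤ G.degree v * k := calc
      _ ≤ ∑ e with G.Incident v e, k := sum_le_sum fun e _ => hk e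
      _ = G.degree v * k := by rw [sum_const, card_incident_eq_degree hloop, smul_eq_mul]
    omega
  calc g * #B = ∑ x ∈ B, g := by rw [sum_const, smul_eq_mul, mul_comm]
    _ ≤ ∑ x ∈ B, #(G.vertexSupport x) := sum_le_sum fun x hx =>
        hg.le_card_vertexSupport hg2 (hB x hx) (ne_of_mem_of_not_mem hx hB0)
    _ = ∑ v, #{x ∈ B | v ∈ G.vertexSupport x} := by
        simpa [bipartiteAbove, bipartiteBelow] using
          sum_card_bipartiteAbove_eq_sum_card_bipartiteBelow (s := B) (t := univ)
            (r := fun x v => v ∈ G.vertexSupport x)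
    _ ≤ ∑ v, G.degree v * k / 2 := sum_le_sum fun v _ => hvert v

theorem IsCycleBasis.finrank_le_card {B : Finset (G.E → ZMod 2)} (hB : G.IsCycleBasis B) :
    finrank (ZMod 2) G.cycleSpace ≤ #B := by
  have h := finrank_span_finset_le_card (R := ZMod 2) B
  rwa [Set.finrank, hB.2.2] at h

end Counting

end Multigraph

theorem tutteCoxeter_basisNum_ge_four_general (G : Multigraph)
    (hreg : ∀ v : G.V, G.degree v = 3)
    (hcard : Nat.card G.V = 30)
    (hgirth_lb : ∀ (n : ℕ) (vs : Fin n → G.V) (es : Fin n → G.E),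
      G.IsCycleOn n vs es → 1 ≤ n → 8 ≤ n) :
    4 ≤ G.basisNum := by
  have hgirth : G.GirthAtLeast 8 := hgirth_lb
  have hV : Fintype.card G.V = 30 := Nat.card_eq_fintype_card (α := G.V) ▸ hcard
  have : Nonempty G.V := Fintype.card_pos_iff.mp (by omega)
  have hE : Fintype.card G.E = 45 := by
    have := G.sum_degrees_eq_twice_card_edges
    simp only [hreg, Finset.sum_const, Finset.card_univ, hV, smul_eq_mul] at this
    omega
  have hdim : 16 ≤ Module.finrank (ZMod 2) G.cycleSpace := by
    have := G.card_E_lt_finrank_cycleSpace_add_card_V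
    omega
  obtain ⟨k₀, B₀, hB₀⟩ := G.exists_isKBasis
  refine le_csInf ⟨k₀, B₀, hB₀⟩ fun k ⟨B, hbasis, hcharge⟩ => ?_
  by_contra! hk
  have hcount := hgirth.mul_card_le_sum_degrees_eq_twice_card_edges_mul_div_two (by norm_num) hbasis.1
    (fun h0 => hbasis.2.1.ne_zero ⟨0, h0⟩ rfl) fun e => (hcharge e).trans (by omega : k ≤ 3)
  have h16 := hdim.trans hbasis.finrank_le_card
  simp only [hreg, Finset.sum_const, Finset.card_univ, hV, smul_eq_mul] at hcount
  omega

/-- The Tutte–Coxeter graph (Tutte 8-cage) — characterized here, via its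
uniqueness as the (3,8)-cage, as a 3-regular graph on 30 vertices with girth 8 — has basis
number at least 4. -/
theorem tutteCoxeter_basisNum_ge_four (G : Multigraph)
    (hreg : ∀ v : G.V, G.degree v = 3)
    (hcard : Nat.card G.V = 30)
    (hgirth_lb : ∀ (n : ℕ) (vs : Fin n → G.V) (es : Fin n → G.E),
      G.IsCycleOn n vs es → 1 ≤ n → 8 ≤ n)
    (hgirth_eq : ∃ (vs : Fin 8 → G.V) (es : Fin 8 → G.E), G.IsCycleOn 8 vs es) :
    4 ≤ G.basisNum :=
  tutteCoxeter_basisNum_ge_four_general G hreg hcard hgirth_lb
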